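/- arXiv:1202.2385 — 2 statements merged into one kernel-verified Lean document; each statement's English description precedes it below -/
import Mathlib

section
/- If H and K are subgroups of a finite group G both achieving the maximal Chermak-Delgado measure, then both ⟨H, K⟩ and H ∩ K also achieve the maximal Chermak-Delgado measure, and ⟨H, K⟩ = HK. -/
open scoped Pointwise

/-- The Chermak-Delgado measure of a subgroup `H` of `G`: `|H| * |C_G(H)|`. -/
noncomputable def cdMeasure {G : Type*} [Group G] (H : Subgroup G) : ℕ :=
  Nat.card H * Nat.card (Subgroup.centralizer (H : Set G))

/-- The Chermak-Delgado lattice: subgroups of maximal Chermak-Delgado measure. -/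
def CD (G : Type*) [Group G] : Set (Subgroup G) :=
  {H : Subgroup G | ∀ K : Subgroup G, cdMeasure K ≤ cdMeasure H}

open Subgroup in
noncomputable def quotImageEquiv {G : Type*} [Group G] (H K : Subgroup G) :
    (↥H ⧸ K.subgroupOf H) ≃ ((H : Set G).image ((↑) : G → G ⧸ K) : Set (G ⧸ K)) := by
  apply Equiv.ofBijective
    (fun x => Quotient.liftOn' x
      (fun (h : H) => (⟨QuotientGroup.mk (h : G), ⟨(h : G), h.2, rfl⟩⟩ :
        ((H : Set G).image ((↑) : G → G ⧸ K) : Set (G ⧸ K))))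
      (fun a b hab => Subtype.ext (by
        rw [QuotientGroup.leftRel_apply, mem_subgroupOf] at hab
        exact (QuotientGroup.eq (s := K)).mpr hab)))
  constructor
  · intro x y
    induction x using Quotient.inductionOn'
    induction y using Quotient.inductionOn'
    intro h
    have := Subtype.ext_iff.mp h
    simp only [Quotient.liftOn'_mk] at this
    exact Quotient.sound' ((QuotientGroup.leftRel_apply).mpr
      (mem_subgroupOf.mpr ((QuotientGroup.eq (s := K)).mp this)))
  · rintro ⟨q, g, hg, rfl⟩
    exact ⟨Quotient.mk'' ⟨g, hg⟩, rfl⟩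

open Subgroup in
lemma card_mul_mul_card_inf {G : Type*} [Group G] [Finite G] (H K : Subgroup G) :
    Nat.card ((H : Set G) * (K : Set G)) * Nat.card (H ⊓ K : Subgroup G)
      = Nat.card H * Nat.card K := by
  have h1 : Nat.card ((H : Set G).image ((↑) : G → G ⧸ K) : Set (G ⧸ K))
      = Nat.card (↥H ⧸ K.subgroupOf H) := (Nat.card_congr (quotImageEquiv H K)).symm
  have h2 : Nat.card (K.subgroupOf H) = Nat.card (H ⊓ K : Subgroup G) := by
    rw [inf_comm, ← Subgroup.subgroupOf_map_subtype]
    exact (Nat.card_congr (Subgroup.equivMapOfInjective _ _ H.subtype_injective).toEquiv)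
  have h3 := Subgroup.card_eq_card_quotient_mul_card_subgroup (K.subgroupOf H)
  rw [Subgroup.card_mul_eq_card_subgroup_mul_card_quotient K (H : Set G), h1, ← h2,
    mul_assoc, mul_comm (Nat.card K), ← h3, mul_comm]

open Subgroup in
lemma centralizer_sup' {G : Type*} [Group G] (H K : Subgroup G) :
    Subgroup.centralizer ((H ⊔ K : Subgroup G) : Set G)
      = Subgroup.centralizer (H : Set G) ⊓ Subgroup.centralizer (K : Set G) := by
  apply le_antisymm
  · exact le_inf (centralizer_le (SetLike.coe_subset_coe.2 le_sup_left))
      (centralizer_le (SetLike.coe_subset_coe.2 le_sup_right))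
  · rw [← Subgroup.le_centralizer_iff]
    exact sup_le (Subgroup.le_centralizer_iff.mpr inf_le_left)
      (Subgroup.le_centralizer_iff.mpr inf_le_right)

theorem stmt_3 {G : Type*} [Group G] [Finite G] (H K : Subgroup G)
    (hH : H ∈ CD G) (hK : K ∈ CD G) :
    H ⊔ K ∈ CD G ∧ H ⊓ K ∈ CD G ∧
      ((H ⊔ K : Subgroup G) : Set G) = (H : Set G) * (K : Set G) := by
  have hmK : cdMeasure K = cdMeasure H := le_antisymm (hH K) (hK H)
  set cH := Subgroup.centralizer (H : Set G) with hcHdef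
  set cK := Subgroup.centralizer (K : Set G) with hcKdef
  set a := Nat.card ((H : Set G) * (K : Set G)) with ha
  set c := Nat.card (H ⊓ K : Subgroup G) with hc
  set d := Nat.card ((cH : Set G) * (cK : Set G)) with hd
  set A := Nat.card (H ⊔ K : Subgroup G) with hA
  set e := Nat.card (Subgroup.centralizer ((H ⊔ K : Subgroup G) : Set G)) with he
  set D := Nat.card (Subgroup.centralizer ((H ⊓ K : Subgroup G) : Set G)) with hD
  have e1 := card_mul_mul_card_inf H K
  have e2 := card_mul_mul_card_inf cH cK
  have e3 : cH ⊓ cK = Subgroup.centralizer ((H ⊔ K : Subgroup G) : Set G) :=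
    (centralizer_sup' H K).symm
  have hsub1 : (H : Set G) * (K : Set G) ⊆ ((H ⊔ K : Subgroup G) : Set G) := by
    calc (H : Set G) * (K : Set G)
        ⊆ ((H ⊔ K : Subgroup G) : Set G) * ((H ⊔ K : Subgroup G) : Set G) :=
          Set.mul_subset_mul (SetLike.coe_subset_coe.2 le_sup_left)
            (SetLike.coe_subset_coe.2 le_sup_right)
      _ = _ := coe_mul_coe _
  have hsub2 : (cH : Set G) * (cK : Set G)
      ⊆ ((Subgroup.centralizer ((H ⊓ K : Subgroup G) : Set G)) : Set G) := by
    calc (cH : Set G) * (cK : Set G)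
        ⊆ ((Subgroup.centralizer ((H ⊓ K : Subgroup G) : Set G)) : Set G)
            * ((Subgroup.centralizer ((H ⊓ K : Subgroup G) : Set G)) : Set G) :=
          Set.mul_subset_mul
            (SetLike.coe_subset_coe.2
              (Subgroup.centralizer_le (SetLike.coe_subset_coe.2 inf_le_left)))
            (SetLike.coe_subset_coe.2
              (Subgroup.centralizer_le (SetLike.coe_subset_coe.2 inf_le_right)))
      _ = _ := coe_mul_coe _
  have hle1 : a ≤ A := by
    have h := Set.ncard_le_ncard hsub1 (Set.toFinite _)
    rw [← Nat.card_coe_set_eq, ← Nat.card_coe_set_eq] at h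
    exact h
  have hle2 : d ≤ D := by
    have h := Set.ncard_le_ncard hsub2 (Set.toFinite _)
    rw [← Nat.card_coe_set_eq, ← Nat.card_coe_set_eq] at h
    exact h
  have hmm : cdMeasure H * cdMeasure H = (a * c) * (d * e) := by
    calc cdMeasure H * cdMeasure H = cdMeasure H * cdMeasure K := by rw [hmK]
      _ = (Nat.card H * Nat.card K) * (Nat.card cH * Nat.card cK) := by
          unfold cdMeasure; ring
      _ = (a * c) * (d * Nat.card (cH ⊓ cK : Subgroup G)) := by rw [e1, e2]
      _ = (a * c) * (d * e) := by rw [e3]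
  have hsupK : cdMeasure (H ⊔ K) = A * e := rfl
  have hinfK : cdMeasure (H ⊓ K) = c * D := rfl
  have hup : cdMeasure (H ⊔ K) ≤ cdMeasure H := hH _
  have hdown : cdMeasure (H ⊓ K) ≤ cdMeasure H := hH _
  have hx : (a * c) * (d * e) ≤ cdMeasure (H ⊔ K) * cdMeasure (H ⊓ K) := by
    calc (a * c) * (d * e) ≤ (A * c) * (D * e) :=
          Nat.mul_le_mul (Nat.mul_le_mul hle1 le_rfl) (Nat.mul_le_mul hle2 le_rfl)
      _ = (A * e) * (c * D) := by ring
      _ = cdMeasure (H ⊔ K) * cdMeasure (H ⊓ K) := by rw [hsupK, hinfK]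
  have hxy : cdMeasure (H ⊔ K) * cdMeasure (H ⊓ K) ≤ cdMeasure H * cdMeasure H :=
    Nat.mul_le_mul hup hdown
  have heq : cdMeasure (H ⊔ K) * cdMeasure (H ⊓ K) = cdMeasure H * cdMeasure H :=
    le_antisymm hxy (hmm ▸ hx)
  have hpos : 0 < cdMeasure H := Nat.mul_pos Nat.card_pos Nat.card_pos
  have hsup : cdMeasure (H ⊔ K) = cdMeasure H := by
    refine le_antisymm hup ?_
    have h : cdMeasure H * cdMeasure H ≤ cdMeasure (H ⊔ K) * cdMeasure H := by
      calc cdMeasure H * cdMeasure H = cdMeasure (H ⊔ K) * cdMeasure (H ⊓ K) := heq.symm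
        _ ≤ cdMeasure (H ⊔ K) * cdMeasure H := Nat.mul_le_mul le_rfl hdown
    exact Nat.le_of_mul_le_mul_right h hpos
  have hinf : cdMeasure (H ⊓ K) = cdMeasure H := by
    refine le_antisymm hdown ?_
    have h : cdMeasure H * cdMeasure H ≤ cdMeasure (H ⊓ K) * cdMeasure H := by
      calc cdMeasure H * cdMeasure H = cdMeasure (H ⊔ K) * cdMeasure (H ⊓ K) := heq.symm
        _ = cdMeasure (H ⊓ K) * cdMeasure (H ⊔ K) := mul_comm _ _
        _ ≤ cdMeasure (H ⊓ K) * cdMeasure H := Nat.mul_le_mul le_rfl hup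
    exact Nat.le_of_mul_le_mul_right h hpos
  -- now derive a = A
  have hdpos : 0 < d := by
    have hne : ((cH : Set G) * (cK : Set G)).Nonempty :=
      ⟨1, by simpa using Set.mul_mem_mul (one_mem cH) (one_mem cK)⟩
    haveI := hne.to_subtype
    exact Nat.card_pos
  have hcde : 0 < c * (d * e) :=
    Nat.mul_pos Nat.card_pos (Nat.mul_pos hdpos Nat.card_pos)
  have key : (a * c) * (d * e) = (A * c) * (D * e) := by
    rw [hmm.symm, ← heq, hsupK, hinfK]; ring
  have hAa : (A * c) * (d * e) = (a * c) * (d * e) := by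
    refine le_antisymm ?_ (Nat.mul_le_mul (Nat.mul_le_mul hle1 le_rfl) le_rfl)
    calc (A * c) * (d * e) ≤ (A * c) * (D * e) :=
          Nat.mul_le_mul le_rfl (Nat.mul_le_mul hle2 le_rfl)
      _ = (a * c) * (d * e) := key.symm
  have haA : a = A := by
    have h' : A * (c * (d * e)) = a * (c * (d * e)) := by
      calc A * (c * (d * e)) = A * c * (d * e) := by ring
        _ = a * c * (d * e) := hAa
        _ = a * (c * (d * e)) := by ring
    exact (Nat.eq_of_mul_eq_mul_right hcde h').symm
  refine ⟨fun L => (hH L).trans hsup.ge, fun L => (hH L).trans hinf.ge, ?_⟩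
  refine (Set.eq_of_subset_of_ncard_le hsub1 ?_ (Set.toFinite _)).symm
  rw [← Nat.card_coe_set_eq, ← Nat.card_coe_set_eq]
  exact le_of_eq haA.symm
end

section
/- Every subgroup of a finite group G that achieves the maximal Chermak-Delgado measure is subnormal in G. -/
/-- A subgroup is subnormal if there is a chain of successive normal inclusions up to `G`. -/
def IsSubnormal {G : Type*} [Group G] (H : Subgroup G) : Prop :=
  ∃ (n : ℕ) (c : ℕ → Subgroup G), c 0 = H ∧ c n = ⊤ ∧
    ∀ i < n, c i ≤ c (i + 1) ∧ ((c i).subgroupOf (c (i + 1))).Normal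

/-!
From `|AB| |A ∩ B| = |A| |B|` and `C(A ⊔ B) = C(A) ∩ C(B)` one gets
`m(A) m(B) = |AB| |C(A) C(B)| |A ∩ B| |C(A ⊔ B)| ≤ m(A ⊔ B) m(A ∩ B)`, so for `A, B` of maximal
measure `m` both `A ⊔ B` and `A ∩ B` have measure `m`, and equality forces `AB = A ⊔ B`.
The CD set is also closed under automorphisms and centralizers.

Let `M ∈ CD(G)` and induct on `|G|` and then downwards on `M`. If `C(M) ⊄ M`, then
`M ⊴ M C(M) ∈ CD(G)` and `M < M C(M)`. If `C(M) ≤ M` and `M` is not normal, pick `g` with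
`Mᵍ ≠ M`; then `J = Mᵍ ⊔ M = Mᵍ M ∈ CD(G)` strictly contains `M`, and `J ≠ G`, since
`g ∈ Mᵍ M` would give `g ∈ M`. As `C(M) ≤ J`, the subgroup `M` is in `CD(J)`, hence subnormal in
`J` by induction on `|G|`, while `J` is subnormal in `G` by the downward induction.
-/

theorem IsSubnormal.of_subgroup_isSubnormal {G : Type*} [Group G] {H : Subgroup G}
    (h : H.IsSubnormal) : IsSubnormal H := by
  obtain ⟨n, f, hmono, hnormal, h0, hn⟩ := Subgroup.IsSubnormal.isSubnormal_iff.mp h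
  exact ⟨n, f, h0, hn, fun i _ => ⟨hmono i.le_succ, hnormal i⟩⟩

section

open Subgroup Pointwise

namespace Subgroup

variable {G : Type*} [Group G]

theorem centralizer_sup (A B : Subgroup G) :
    centralizer ((A ⊔ B : Subgroup G) : Set G) = centralizer A ⊓ centralizer B := by
  rw [sup_eq_closure, centralizer_closure]
  exact SetLike.coe_injective (Set.centralizer_union ..)

theorem card_subgroupOf_of_le {H K : Subgroup G} (h : H ≤ K) :
    Nat.card (H.subgroupOf K) = Nat.card H :=
  Nat.card_congr (subgroupOfEquivOfLe h).toEquiv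

theorem card_coe_mul_le_of_le [Finite G] {H K L : Subgroup G} (hH : H ≤ L) (hK : K ≤ L) :
    Nat.card ((H : Set G) * (K : Set G) : Set G) ≤ Nat.card L :=
  Nat.card_mono (Set.toFinite _) (mul_subset hH hK)

theorem card_coe_mul_le_card_sup [Finite G] (A B : Subgroup G) :
    Nat.card ((A : Set G) * (B : Set G) : Set G) ≤ Nat.card (A ⊔ B : Subgroup G) :=
  card_coe_mul_le_of_le le_sup_left le_sup_right

theorem card_coe_centralizer_mul_le_card_centralizer_inf [Finite G] (A B : Subgroup G) :
    Nat.card (((centralizer A : Subgroup G) : Set G) * ((centralizer B : Subgroup G) : Set G) :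
      Set G) ≤ Nat.card (centralizer ((A ⊓ B : Subgroup G) : Set G)) :=
  card_coe_mul_le_of_le (centralizer_le (SetLike.coe_subset_coe.mpr inf_le_left))
    (centralizer_le (SetLike.coe_subset_coe.mpr inf_le_right))

theorem card_coe_mul_mul_card_inf [Finite G] (A B : Subgroup G) :
    Nat.card ((A : Set G) * (B : Set G) : Set G) * Nat.card (A ⊓ B : Subgroup G) =
      Nat.card A * Nat.card B := by
  -- orbit-stabilizer for `A` acting on `G ⧸ B`: the orbit of the trivial coset is the image of `A`
  have hsmul (a : A) : a • ((1 : G) : G ⧸ B) = ((a : G) : G ⧸ B) := congrArg _ (mul_one _)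
  have horbit : MulAction.orbit A ((1 : G) : G ⧸ B) = (A : Set G).image (↑) := by
    ext x
    simp [MulAction.mem_orbit_iff, hsmul]
  have hstab : MulAction.stabilizer A ((1 : G) : G ⧸ B) = B.subgroupOf A := by
    ext a
    rw [MulAction.mem_stabilizer_iff, hsmul, QuotientGroup.eq, mem_subgroupOf, mul_one, inv_mem_iff]
  have hcard := Nat.card_congr (MulAction.orbitProdStabilizerEquivGroup A ((1 : G) : G ⧸ B))
  rw [Nat.card_prod, hstab, horbit, ← inf_subgroupOf_right, card_subgroupOf_of_le inf_le_right,
    inf_comm] at hcard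
  rw [card_mul_eq_card_subgroup_mul_card_quotient, ← hcard]
  ring

theorem normal_subgroupOf_sup_centralizer (H : Subgroup G) :
    (H.subgroupOf (H ⊔ centralizer H)).Normal :=
  (normal_subgroupOf_iff_le_normalizer le_sup_left).mpr
    (sup_le le_normalizer (centralizer_le_normalizer _))

theorem mem_of_mem_map_conj_mul {H : Subgroup G} {g : G}
    (hg : g ∈ ((H.map (MulAut.conj g) : Subgroup G) : Set G) * H) : g ∈ H := by
  obtain ⟨_, ⟨h, hh, rfl⟩, h', hh', hgg⟩ := hg
  simp only [MonoidHom.coe_coe, MulAut.conj_apply] at hgg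
  have : g = h' * h :=
    calc g = h' * (g⁻¹ * (g * h * g⁻¹ * h'))⁻¹ * h := by group
      _ = h' * h := by rw [hgg]; group
  exact this ▸ mul_mem hh' hh

end Subgroup

variable {G : Type*} [Group G]

theorem cdMeasure_le_cdMeasure_map {G' : Type*} [Group G'] [Finite G'] {f : G →* G'}
    (hf : Function.Injective f) (H : Subgroup G) : cdMeasure H ≤ cdMeasure (H.map f) := by
  rw [cdMeasure, cdMeasure, card_map_of_injective hf,
    ← card_map_of_injective (K := centralizer _) hf, coe_map]
  exact Nat.mul_le_mul_left _ (card_le_of_le (map_centralizer_le_centralizer_image _ f))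

theorem cdMeasure_eq_of_mem_CD {A B : Subgroup G} (hA : A ∈ CD G) (hB : B ∈ CD G) :
    cdMeasure A = cdMeasure B :=
  le_antisymm (hB A) (hA B)

variable [Finite G]

theorem cdMeasure_pos (H : Subgroup G) : 0 < cdMeasure H :=
  Nat.mul_pos Nat.card_pos Nat.card_pos

theorem cdMeasure_mul_cdMeasure (A B : Subgroup G) :
    cdMeasure A * cdMeasure B =
      Nat.card ((A : Set G) * (B : Set G) : Set G) *
        Nat.card (((centralizer A : Subgroup G) : Set G) * ((centralizer B : Subgroup G) : Set G) :
          Set G) *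
        (Nat.card (A ⊓ B : Subgroup G) * Nat.card (centralizer ((A ⊔ B : Subgroup G) : Set G))) := by
  rw [centralizer_sup, cdMeasure, cdMeasure, mul_mul_mul_comm, ← card_coe_mul_mul_card_inf A B,
    ← card_coe_mul_mul_card_inf (centralizer (A : Set G)) (centralizer (B : Set G))]
  ring

theorem cdMeasure_mul_cdMeasure_le (A B : Subgroup G) :
    cdMeasure A * cdMeasure B ≤ cdMeasure (A ⊔ B) * cdMeasure (A ⊓ B) := by
  have hmul := card_coe_mul_le_card_sup A B
  have hcent := card_coe_centralizer_mul_le_card_centralizer_inf A B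
  rw [cdMeasure_mul_cdMeasure, cdMeasure, cdMeasure]
  calc _ ≤ Nat.card (A ⊔ B : Subgroup G) * Nat.card (centralizer ((A ⊓ B : Subgroup G) : Set G)) *
        (Nat.card (A ⊓ B : Subgroup G) * Nat.card (centralizer ((A ⊔ B : Subgroup G) : Set G))) := by
        gcongr
    _ = _ := by ring

theorem sup_mem_CD {A B : Subgroup G} (hA : A ∈ CD G) (hB : B ∈ CD G) : A ⊔ B ∈ CD G := by
  refine fun K => (hA K).trans (not_lt.mp fun hlt => ?_)
  have := Nat.mul_lt_mul_of_lt_of_le hlt (hA (A ⊓ B)) (cdMeasure_pos A)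
  have := cdMeasure_mul_cdMeasure_le A B
  rw [← cdMeasure_eq_of_mem_CD hA hB] at this
  omega

theorem inf_mem_CD {A B : Subgroup G} (hA : A ∈ CD G) (hB : B ∈ CD G) : A ⊓ B ∈ CD G := by
  refine fun K => (hA K).trans (not_lt.mp fun hlt => ?_)
  have := Nat.mul_lt_mul_of_le_of_lt (hA (A ⊔ B)) hlt (cdMeasure_pos A)
  have := cdMeasure_mul_cdMeasure_le A B
  rw [← cdMeasure_eq_of_mem_CD hA hB] at this
  omega

theorem coe_mul_eq_sup_of_mem_CD {A B : Subgroup G} (hA : A ∈ CD G) (hB : B ∈ CD G) :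
    (A : Set G) * (B : Set G) = ((A ⊔ B : Subgroup G) : Set G) := by
  have hprod := cdMeasure_mul_cdMeasure A B
  rw [cdMeasure_eq_of_mem_CD hA (sup_mem_CD hA hB), cdMeasure_eq_of_mem_CD hB (inf_mem_CD hA hB),
    cdMeasure, cdMeasure] at hprod
  have hmul := card_coe_mul_le_card_sup A B
  have hcent := card_coe_centralizer_mul_le_card_centralizer_inf A B
  set a := Nat.card ((A : Set G) * (B : Set G) : Set G)
  set u := Nat.card (((centralizer A : Subgroup G) : Set G) * ((centralizer B : Subgroup G) : Set G) :
    Set G)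
  set j := Nat.card (A ⊔ B : Subgroup G)
  set e := Nat.card (centralizer ((A ⊓ B : Subgroup G) : Set G))
  have hpos : 0 < Nat.card (A ⊓ B : Subgroup G) *
      Nat.card (centralizer ((A ⊔ B : Subgroup G) : Set G)) := Nat.mul_pos Nat.card_pos Nat.card_pos
  have he : 0 < e := Nat.card_pos
  have heq : a * u = j * e := Nat.eq_of_mul_eq_mul_right hpos (by rw [← hprod]; ring)
  have haj : j ≤ a := by nlinarith
  refine Set.eq_of_subset_of_ncard_le
    (mul_subset (SetLike.coe_subset_coe.mpr le_sup_left) (SetLike.coe_subset_coe.mpr le_sup_right))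
    ?_ (Set.toFinite _)
  rwa [← Nat.card_coe_set_eq, ← Nat.card_coe_set_eq]

theorem centralizer_mem_CD {H : Subgroup G} (hH : H ∈ CD G) : centralizer (H : Set G) ∈ CD G :=
  fun K => (hH K).trans <| by
    rw [cdMeasure, cdMeasure, mul_comm]
    exact Nat.mul_le_mul_left _ (card_le_of_le (le_centralizer_iff.mp le_rfl))

theorem map_mem_CD {H : Subgroup G} (hH : H ∈ CD G) (e : G ≃* G) : H.map (e : G →* G) ∈ CD G :=
  fun K => (hH K).trans (cdMeasure_le_cdMeasure_map e.injective H)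

theorem subgroupOf_mem_CD {H J : Subgroup G} (hH : H ∈ CD G) (hHJ : H ≤ J)
    (hCJ : centralizer (H : Set G) ≤ J) : H.subgroupOf J ∈ CD J := by
  have hcent : centralizer (H : Set G) ≤ (centralizer (H.subgroupOf J : Set J)).map J.subtype := by
    intro c hc
    refine ⟨⟨c, hCJ hc⟩, ?_, rfl⟩
    rw [SetLike.mem_coe, mem_centralizer_iff]
    intro h hh
    exact Subtype.ext (mem_centralizer_iff.mp hc h (mem_subgroupOf.mp hh))
  have hle : cdMeasure H ≤ cdMeasure (H.subgroupOf J) := by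
    rw [cdMeasure, cdMeasure, card_subgroupOf_of_le hHJ,
      ← card_map_of_injective J.subtype_injective]
    exact Nat.mul_le_mul_left _ (card_le_of_le hcent)
  exact fun K => (cdMeasure_le_cdMeasure_map J.subtype_injective K).trans ((hH _).trans hle)

namespace Subgroup

theorem isSubnormal_of_mem_CD_of_forall {M : Subgroup G} (hM : M ∈ CD G)
    (hproper : ∀ J : Subgroup G, J ≠ ⊤ → ∀ L : Subgroup J, L ∈ CD J → L.IsSubnormal)
    (habove : ∀ K, M < K → K ∈ CD G → K.IsSubnormal) : M.IsSubnormal := by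
  by_cases hC : centralizer (M : Set G) ≤ M
  · by_cases hnormal : M.Normal
    · exact hnormal.isSubnormal
    obtain ⟨g, hg⟩ : ∃ g : G, M.map (MulAut.conj g) ≠ M := by
      simpa [normal_iff_map_conj_eq] using hnormal
    have hMg := map_mem_CD hM (MulAut.conj g)
    have hMJ : M < M.map (MulAut.conj g) ⊔ M := by
      refine right_lt_sup.mpr fun hle => hg (eq_of_le_of_card_ge hle ?_)
      rw [card_map_of_injective (MulAut.conj g).injective]
    have hJtop : M.map (MulAut.conj g) ⊔ M ≠ ⊤ := by
      intro htop
      have hgM : g ∈ M := mem_of_mem_map_conj_mul <| by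
        rw [coe_mul_eq_sup_of_mem_CD hMg hM, htop]
        exact mem_top g
      exact hg (mem_normalizer_iff_map_conj_eq.mp (le_normalizer hgM))
    exact IsSubnormal.trans hMJ.le
      (hproper _ hJtop _ (subgroupOf_mem_CD hM hMJ.le (hC.trans hMJ.le)))
      (habove _ hMJ (sup_mem_CD hMg hM))
  · have hMK : M < M ⊔ centralizer (M : Set G) := left_lt_sup.mpr hC
    exact IsSubnormal.trans hMK.le (normal_subgroupOf_sup_centralizer M).isSubnormal
      (habove _ hMK (sup_mem_CD hM (centralizer_mem_CD hM)))

theorem isSubnormal_of_mem_CD {M : Subgroup G} (hM : M ∈ CD G) : M.IsSubnormal := by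
  induction hn : Nat.card G using Nat.strong_induction_on generalizing G with
  | _ n ih =>
  induction M using WellFoundedGT.induction with
  | _ M ihM =>
  refine isSubnormal_of_mem_CD_of_forall hM (fun J hJ L hL => ?_) (fun K hMK hK => ihM K hMK hK)
  exact ih _ (hn ▸ (card_le_card_group J).lt_of_ne (mt (eq_top_of_card_eq J) hJ)) hL rfl

end Subgroup

end

theorem stmt_10 {G : Type*} [Group G] [Finite G] (U : Subgroup G) (hU : U ∈ CD G) :
    IsSubnormal U :=
  .of_subgroup_isSubnormal (Subgroup.isSubnormal_of_mem_CD hU)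
end
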